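/- The 2nd chain Möbius function coincides with the Möbius function of the lattice of flats: for any matroid M and flats X ⊆ Y, μ^2(X,Y) = μ(X,Y), where μ is the Möbius function of the lattice of flats of M. -/
import Mathlib


open Finset

def IsMatroidRk (α : Type*) [DecidableEq α] [Fintype α] (rk : Finset α → ℕ) : Prop :=
  rk ∅ = 0 ∧ (∀ a : α, rk {a} ≤ 1) ∧ (∀ A B : Finset α, A ⊆ B → rk A ≤ rk B) ∧
    (∀ A B : Finset α, rk (A ∩ B) + rk (A ∪ B) ≤ rk A + rk B)

/-- A flat of a matroid: adding any element raises the rank. -/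
def IsFlat {α : Type*} [DecidableEq α] [Fintype α] (rk : Finset α → ℕ)
    (F : Finset α) : Prop :=
  ∀ a : α, a ∉ F → rk F < rk (insert a F)

instance {α : Type*} [DecidableEq α] [Fintype α] (rk : Finset α → ℕ)
    (F : Finset α) : Decidable (IsFlat rk F) := by
  unfold IsFlat; infer_instance

/-- The closure of a set: all elements not raising the rank. -/
def matCl {α : Type*} [DecidableEq α] [Fintype α] (rk : Finset α → ℕ)
    (S : Finset α) : Finset α :=
  Finset.univ.filter (fun a => rk (insert a S) = rk S)

/-- The 2nd chain Möbius function on a pair of flats `X ⊆ Y`. -/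
def chainMu2 {α : Type*} [DecidableEq α] [Fintype α] (rk : Finset α → ℕ)
    (X Y : Finset α) : ℤ :=
  ∑ p ∈ Finset.univ.filter
      (fun p : Finset α × Finset α =>
        p.1 ⊆ p.2 ∧ matCl rk p.1 = X ∧ matCl rk p.2 = Y),
    (-1 : ℤ) ^ (p.1.card + p.2.card)

section Helpers

variable {α : Type*} [DecidableEq α] [Fintype α] {rk : Finset α → ℕ}

lemma mem_matCl_iff {a : α} {S : Finset α} :
    a ∈ matCl rk S ↔ rk (insert a S) = rk S := by
  simp [matCl]

lemma subset_matCl (S : Finset α) : S ⊆ matCl rk S := by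
  intro a ha
  rw [mem_matCl_iff, Finset.insert_eq_self.2 ha]

lemma matCl_subset_of_flat (h : IsMatroidRk α rk) {F A : Finset α}
    (hF : IsFlat rk F) (hAF : A ⊆ F) : matCl rk A ⊆ F := by
  obtain ⟨-, -, hmono, hsub⟩ := h
  intro a ha
  rw [mem_matCl_iff] at ha
  by_contra haF
  have hinter : insert a A ∩ F = A := by
    ext x
    simp only [Finset.mem_inter, Finset.mem_insert]
    constructor
    · rintro ⟨(rfl | hx), hxF⟩
      · exact absurd hxF haF
      · exact hx
    · intro hx; exact ⟨Or.inr hx, hAF hx⟩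
  have hunion : insert a A ∪ F = insert a F := by
    ext x
    simp only [Finset.mem_union, Finset.mem_insert]
    constructor
    · rintro ((rfl | hx) | hx)
      · exact Or.inl rfl
      · exact Or.inr (hAF hx)
      · exact Or.inr hx
    · rintro (rfl | hx)
      · exact Or.inl (Or.inl rfl)
      · exact Or.inr hx
  have h1 := hsub (insert a A) F
  rw [hinter, hunion, ha] at h1
  have h2 := hF a haF
  omega

lemma rk_union_eq (h : IsMatroidRk α rk) {A : Finset α} :
    ∀ T : Finset α, (∀ a ∈ T, rk (insert a A) = rk A) → rk (A ∪ T) = rk A := by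
  obtain ⟨-, -, hmono, hsub⟩ := h
  intro T
  induction T using Finset.induction_on with
  | empty => intro _; rw [Finset.union_empty]
  | @insert a T ha ih =>
    intro hT
    have hT' : ∀ b ∈ T, rk (insert b A) = rk A := fun b hb => hT b (Finset.mem_insert_of_mem hb)
    have hAT : rk (A ∪ T) = rk A := ih hT'
    have haA : rk (insert a A) = rk A := hT a (Finset.mem_insert_self a T)
    have hsub1 := hsub (A ∪ T) (insert a A)
    have hunion : (A ∪ T) ∪ insert a A = insert a (A ∪ T) := by
      ext x
      simp only [Finset.mem_union, Finset.mem_insert]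
      tauto
    have hinterl : rk A ≤ rk ((A ∪ T) ∩ insert a A) := by
      apply hmono
      intro x hx
      exact Finset.mem_inter.2 ⟨Finset.mem_union_left _ hx, Finset.mem_insert_of_mem hx⟩
    have hinterr : rk ((A ∪ T) ∩ insert a A) ≤ rk (A ∪ T) :=
      hmono _ _ Finset.inter_subset_left
    rw [hunion, haA] at hsub1
    have hge : rk (A ∪ T) ≤ rk (insert a (A ∪ T)) := hmono _ _ (Finset.subset_insert _ _)
    have : A ∪ insert a T = insert a (A ∪ T) := by
      ext x
      simp only [Finset.mem_union, Finset.mem_insert]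
      tauto
    rw [this]
    omega

lemma rk_matCl (h : IsMatroidRk α rk) (A : Finset α) : rk (matCl rk A) = rk A := by
  have h1 : rk (A ∪ matCl rk A) = rk A :=
    rk_union_eq h (matCl rk A) (fun a ha => mem_matCl_iff.1 ha)
  rwa [Finset.union_eq_right.2 (subset_matCl A)] at h1

lemma isFlat_matCl (h : IsMatroidRk α rk) (A : Finset α) : IsFlat rk (matCl rk A) := by
  have hmono := h.2.2.1
  intro a ha
  refine lt_of_le_of_ne (hmono _ _ (Finset.subset_insert _ _)) (fun heq => ha ?_)
  rw [mem_matCl_iff]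
  have h1 : rk (insert a A) ≤ rk (insert a (matCl rk A)) :=
    hmono _ _ (Finset.insert_subset_insert a (subset_matCl A))
  have h2 : rk A ≤ rk (insert a A) := hmono _ _ (Finset.subset_insert _ _)
  have h3 := rk_matCl h A
  omega

lemma matCl_flat_eq (h : IsMatroidRk α rk) {F : Finset α} (hF : IsFlat rk F) :
    matCl rk F = F :=
  Finset.Subset.antisymm (matCl_subset_of_flat h hF Finset.Subset.rfl) (subset_matCl F)

lemma matCl_mono (h : IsMatroidRk α rk) {A B : Finset α} (hAB : A ⊆ B) :
    matCl rk A ⊆ matCl rk B :=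
  matCl_subset_of_flat h (isFlat_matCl h B) (hAB.trans (subset_matCl B))

lemma sum_interval_neg_one_pow (A1 Y : Finset α) (hA1 : A1 ⊆ Y) :
    ∑ A2 ∈ Finset.univ.filter (fun A2 : Finset α => A1 ⊆ A2 ∧ A2 ⊆ Y),
      (-1 : ℤ) ^ A2.card = if A1 = Y then (-1 : ℤ) ^ Y.card else 0 := by
  have himg : Finset.univ.filter (fun A2 : Finset α => A1 ⊆ A2 ∧ A2 ⊆ Y)
      = (Y \ A1).powerset.image (fun B => A1 ∪ B) := by
    ext A2
    simp only [Finset.mem_filter, Finset.mem_univ, true_and, Finset.mem_image,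
      Finset.mem_powerset]
    constructor
    · rintro ⟨h1, h2⟩
      exact ⟨A2 \ A1, Finset.sdiff_subset_sdiff h2 Finset.Subset.rfl,
        Finset.union_sdiff_of_subset h1⟩
    · rintro ⟨B, hB, rfl⟩
      exact ⟨Finset.subset_union_left,
        Finset.union_subset hA1 (hB.trans Finset.sdiff_subset)⟩
  have hinj : ∀ B1 ∈ (Y \ A1).powerset, ∀ B2 ∈ (Y \ A1).powerset,
      A1 ∪ B1 = A1 ∪ B2 → B1 = B2 := by
    intro B1 hB1 B2 hB2 heq
    rw [Finset.mem_powerset] at hB1 hB2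
    have d1 : Disjoint A1 B1 := (Finset.sdiff_disjoint.mono_left hB1).symm
    have d2 : Disjoint A1 B2 := (Finset.sdiff_disjoint.mono_left hB2).symm
    rw [← Finset.union_sdiff_cancel_left d1, heq, Finset.union_sdiff_cancel_left d2]
  rw [himg, Finset.sum_image hinj]
  have hcard : ∀ B ∈ (Y \ A1).powerset,
      (-1 : ℤ) ^ (A1 ∪ B).card = (-1 : ℤ) ^ A1.card * (-1 : ℤ) ^ B.card := by
    intro B hB
    rw [Finset.mem_powerset] at hB
    have d : Disjoint A1 B := (Finset.sdiff_disjoint.mono_left hB).symm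
    rw [Finset.card_union_of_disjoint d, pow_add]
  rw [Finset.sum_congr rfl hcard, ← Finset.mul_sum,
    Finset.sum_powerset_neg_one_pow_card]
  by_cases hYA : A1 = Y
  · subst hYA
    simp
  · rw [if_neg hYA, if_neg, mul_zero]
    rw [Finset.sdiff_eq_empty_iff_subset]
    intro hYsub
    exact hYA (Finset.Subset.antisymm hA1 hYsub)

lemma chainMu2_key (h : IsMatroidRk α rk) {X Y : Finset α}
    (hY : IsFlat rk Y) (hXY : X ⊆ Y) :
    ∑ Z ∈ Finset.univ.filter
        (fun Z : Finset α => IsFlat rk Z ∧ X ⊆ Z ∧ Z ⊆ Y), chainMu2 rk X Z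
      = if X = Y then 1 else 0 := by
  classical
  set s : Finset (Finset α × Finset α) :=
    Finset.univ.filter (fun p : Finset α × Finset α => p.1 ⊆ p.2 ∧ matCl rk p.1 = X) with hs
  have hfib : ∀ Z : Finset α, chainMu2 rk X Z
      = ∑ p ∈ s.filter (fun p => matCl rk p.2 = Z), (-1 : ℤ) ^ (p.1.card + p.2.card) := by
    intro Z
    unfold chainMu2
    rw [hs, Finset.filter_filter]
    apply Finset.sum_congr
    · apply Finset.filter_congr
      intro p _
      tauto
    · intros; rfl
  rw [Finset.sum_congr rfl (fun Z _ => hfib Z),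
    Finset.sum_fiberwise_eq_sum_filter s
      (Finset.univ.filter (fun Z : Finset α => IsFlat rk Z ∧ X ⊆ Z ∧ Z ⊆ Y))
      (fun p => matCl rk p.2)
      (fun p : Finset α × Finset α => (-1 : ℤ) ^ (p.1.card + p.2.card))]
  have hset : s.filter (fun p => matCl rk p.2 ∈ Finset.univ.filter
        (fun Z : Finset α => IsFlat rk Z ∧ X ⊆ Z ∧ Z ⊆ Y))
      = Finset.univ.filter (fun p : Finset α × Finset α =>
          p.1 ⊆ p.2 ∧ matCl rk p.1 = X ∧ p.2 ⊆ Y) := by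
    rw [hs, Finset.filter_filter]
    apply Finset.filter_congr
    intro p _
    simp only [Finset.mem_filter, Finset.mem_univ, true_and]
    constructor
    · rintro ⟨⟨h12, hcl1⟩, -, -, hcl2Y⟩
      exact ⟨h12, hcl1, (subset_matCl p.2).trans hcl2Y⟩
    · rintro ⟨h12, hcl1, h2Y⟩
      refine ⟨⟨h12, hcl1⟩, isFlat_matCl h p.2, ?_, matCl_subset_of_flat h hY h2Y⟩
      rw [← hcl1]
      exact matCl_mono h h12
  rw [hset, Finset.sum_filter, Fintype.sum_prod_type]
  have hterm : ∀ A1 : Finset α,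
      (∑ A2 : Finset α, if A1 ⊆ A2 ∧ matCl rk A1 = X ∧ A2 ⊆ Y
          then (-1 : ℤ) ^ (A1.card + A2.card) else 0)
        = if A1 = Y then (if X = Y then 1 else 0) else 0 := by
    intro A1
    by_cases hcl1 : matCl rk A1 = X
    · have hA1Y : A1 ⊆ Y := (subset_matCl A1).trans (hcl1 ▸ hXY)
      have : (∑ A2 : Finset α, if A1 ⊆ A2 ∧ matCl rk A1 = X ∧ A2 ⊆ Y
            then (-1 : ℤ) ^ (A1.card + A2.card) else 0)
          = ∑ A2 ∈ Finset.univ.filter (fun A2 : Finset α => A1 ⊆ A2 ∧ A2 ⊆ Y),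
              (-1 : ℤ) ^ A1.card * (-1 : ℤ) ^ A2.card := by
        rw [Finset.sum_filter]
        apply Finset.sum_congr rfl
        intro A2 _
        by_cases h12 : A1 ⊆ A2 <;> by_cases h2Y : A2 ⊆ Y <;>
          simp [h12, h2Y, hcl1, pow_add]
      rw [this, ← Finset.mul_sum, sum_interval_neg_one_pow A1 Y hA1Y]
      by_cases hA1 : A1 = Y
      · subst hA1
        rw [if_pos rfl, if_pos rfl, ← pow_add]
        have hXA1 : X = A1 := by rw [← hcl1, matCl_flat_eq h hY]
        rw [if_pos hXA1]
        exact Even.neg_one_pow ⟨A1.card, by ring⟩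
      · rw [if_neg hA1, if_neg hA1, mul_zero]
    · rw [Finset.sum_eq_zero (fun A2 _ => by rw [if_neg]; tauto)]
      by_cases hA1Y : A1 = Y
      · subst hA1Y
        rw [matCl_flat_eq h hY] at hcl1
        rw [if_pos rfl, if_neg (fun hXY' => hcl1 hXY'.symm)]
      · rw [if_neg hA1Y]
  rw [Finset.sum_congr rfl (fun A1 _ => hterm A1), Finset.sum_ite_eq' Finset.univ Y
    (fun _ => if X = Y then (1 : ℤ) else 0), if_pos (Finset.mem_univ Y)]

lemma chainMu2_self (h : IsMatroidRk α rk) {X : Finset α} (hX : IsFlat rk X) :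
    chainMu2 rk X X = 1 := by
  have hkey := chainMu2_key h hX (Finset.Subset.refl X)
  rw [if_pos rfl] at hkey
  have hsingle : Finset.univ.filter
      (fun Z : Finset α => IsFlat rk Z ∧ X ⊆ Z ∧ Z ⊆ X) = {X} := by
    ext Z
    simp only [Finset.mem_filter, Finset.mem_univ, true_and, Finset.mem_singleton]
    constructor
    · rintro ⟨-, h1, h2⟩
      exact Finset.Subset.antisymm h2 h1
    · rintro rfl
      exact ⟨hX, Finset.Subset.rfl, Finset.Subset.rfl⟩
  rwa [hsingle, Finset.sum_singleton] at hkey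

end Helpers

/-- the 2nd chain Möbius function coincides with the Möbius
function of the lattice of flats (characterized by its defining recursion). -/
theorem chainMu2_eq_mobius {α : Type*} [DecidableEq α] [Fintype α]
    (rk : Finset α → ℕ) (h : IsMatroidRk α rk) (μ : Finset α → Finset α → ℤ)
    (hμdiag : ∀ F : Finset α, IsFlat rk F → μ F F = 1)
    (hμrec : ∀ X Y : Finset α, IsFlat rk X → IsFlat rk Y → X ⊆ Y → X ≠ Y →
      ∑ Z ∈ Finset.univ.filter
          (fun Z : Finset α => IsFlat rk Z ∧ X ⊆ Z ∧ Z ⊆ Y), μ X Z = 0)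
    (X Y : Finset α) (hX : IsFlat rk X) (hY : IsFlat rk Y) (hXY : X ⊆ Y) :
    chainMu2 rk X Y = μ X Y := by
  suffices H : ∀ n (Y : Finset α), Y.card ≤ n → IsFlat rk Y → X ⊆ Y →
      chainMu2 rk X Y = μ X Y from H Y.card Y le_rfl hY hXY
  intro n
  induction n with
  | zero =>
    intro Y hc hYf hXYs
    have hYe : Y = ∅ := Finset.card_eq_zero.1 (Nat.le_zero.1 hc)
    have hXe : X = Y := by
      subst hYe
      exact Finset.subset_empty.1 hXYs
    subst hXe
    rw [chainMu2_self h hX, hμdiag X hX]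
  | succ n ih =>
    intro Y hc hYf hXYs
    by_cases hxy : X = Y
    · subst hxy
      rw [chainMu2_self h hX, hμdiag X hX]
    · have hrecμ := hμrec X Y hX hYf hXYs hxy
      have hrec2 := chainMu2_key h hYf hXYs
      rw [if_neg hxy] at hrec2
      have hYmem : Y ∈ Finset.univ.filter
          (fun Z : Finset α => IsFlat rk Z ∧ X ⊆ Z ∧ Z ⊆ Y) := by
        simp [hYf, hXYs]
      rw [← Finset.add_sum_erase _ _ hYmem] at hrecμ hrec2
      have heq : ∀ Z ∈ (Finset.univ.filter
          (fun Z : Finset α => IsFlat rk Z ∧ X ⊆ Z ∧ Z ⊆ Y)).erase Y,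
          chainMu2 rk X Z = μ X Z := by
        intro Z hZ
        rw [Finset.mem_erase, Finset.mem_filter] at hZ
        obtain ⟨hZne, -, hZf, hXZ, hZY⟩ := hZ
        apply ih Z _ hZf hXZ
        have : Z ⊂ Y := Finset.ssubset_iff_subset_ne.2 ⟨hZY, hZne⟩
        have := Finset.card_lt_card this
        omega
      have hsums : ∑ Z ∈ (Finset.univ.filter
          (fun Z : Finset α => IsFlat rk Z ∧ X ⊆ Z ∧ Z ⊆ Y)).erase Y,
          chainMu2 rk X Z = ∑ Z ∈ (Finset.univ.filter
          (fun Z : Finset α => IsFlat rk Z ∧ X ⊆ Z ∧ Z ⊆ Y)).erase Y, μ X Z :=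
        Finset.sum_congr rfl heq
      rw [hsums] at hrec2
      omega
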